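/- arXiv:2203.02611 — 3 statements merged into one kernel-verified Lean document; each statement's English description precedes it below -/
import Mathlib

section
/- With H > h > 0, W > w > 0, M > 1, and α defined by α = 1 - [((H-h)w + (W-w)h) + √(((H-h)w + (W-w)h)² + 4hw(H-h)(W-w)(M-1))] / (2hw(M-1)), we have α ≥ 0 if and only if hwM ≥ HW. -/
theorem votcsw_alpha_nonneg_iff
    (H W h w M α : ℝ)
    (hh : 0 < h) (hw : 0 < w) (hH : h < H) (hW : w < W) (hM : 1 < M)
    (hα : α = 1 - (((H - h) * w + (W - w) * h) +
      Real.sqrt (((H - h) * w + (W - w) * h) ^ 2 +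
        4 * h * w * (H - h) * (W - w) * (M - 1))) / (2 * h * w * (M - 1))) :
    α ≥ 0 ↔ h * w * M ≥ H * W := by
  have hM1 : 0 < M - 1 := by linarith
  have hden : 0 < 2 * h * w * (M - 1) := by positivity
  set B : ℝ := (H - h) * w + (W - w) * h with hB
  set A : ℝ := B ^ 2 + 4 * h * w * (H - h) * (W - w) * (M - 1) with hA
  have hB0 : 0 < B := by
    have : 0 < (H - h) * w := by nlinarith
    have : 0 < (W - w) * h := by nlinarith
    nlinarith
  have hA0 : 0 ≤ A := by
    have : 0 ≤ 4 * h * w * (H - h) * (W - w) * (M - 1) := by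
      have h1 : 0 < H - h := by linarith
      have h2 : 0 < W - w := by linarith
      positivity
    nlinarith
  have hS0 : 0 ≤ Real.sqrt A := Real.sqrt_nonneg A
  have hS2 : Real.sqrt A ^ 2 = A := Real.sq_sqrt hA0
  rw [hα, ge_iff_le, sub_nonneg, div_le_one hden]
  constructor
  · intro h1
    have hSD : Real.sqrt A ≤ 2 * h * w * (M - 1) - B := by linarith
    have hD0 : 0 ≤ 2 * h * w * (M - 1) - B := le_trans hS0 hSD
    have hsq : A ≤ (2 * h * w * (M - 1) - B) ^ 2 := by nlinarith
    nlinarith [hsq, hM1, mul_pos hh hw]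
  · intro h2
    have hD0 : 0 ≤ 2 * h * w * (M - 1) - B := by nlinarith
    have hsq : A ≤ (2 * h * w * (M - 1) - B) ^ 2 := by nlinarith
    have := Real.sqrt_le_sqrt hsq
    rw [Real.sqrt_sq hD0] at this
    linarith
end

section
/- Let 0 < H_min ≤ H_max, 0 ≤ α_min ≤ α_max < 1, M > 1, and suppose H_max(√M - α_max(√M-1)) ≤ H_min(√M - α_min(√M-1)). If α_max is chosen first and α_min second, then necessarily α_max ≥ 1 - H_min/H_max and α_min ≤ 1 - (H_max/H_min)(1 - α_max), and given these, √M ≥ (H_max·α_max - H_min·α_min)/(H_min(1-α_min) - H_max(1-α_max)). -/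
theorem votcsw_alpha_max_first_conditions
    (Hmin Hmax M αmin αmax : ℝ)
    (hHmin : 0 < Hmin) (hHmm : Hmin ≤ Hmax) (hM : 1 < M)
    (h1 : 0 ≤ αmin) (h2 : αmin ≤ αmax) (h3 : αmax < 1)
    (hcomp : Hmax * (Real.sqrt M - αmax * (Real.sqrt M - 1)) ≤
      Hmin * (Real.sqrt M - αmin * (Real.sqrt M - 1))) :
    αmax ≥ 1 - Hmin / Hmax ∧
    αmin ≤ 1 - (Hmax / Hmin) * (1 - αmax) ∧
    Real.sqrt M ≥ (Hmax * αmax - Hmin * αmin) /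
      (Hmin * (1 - αmin) - Hmax * (1 - αmax)) := by
  have hHmax : 0 < Hmax := lt_of_lt_of_le hHmin hHmm
  set s := Real.sqrt M with hsdef
  have hs : 1 < s := by
    have := Real.sqrt_lt_sqrt (by norm_num) hM
    simpa [Real.sqrt_one] using this
  -- key rearrangement
  have hkey : Hmax * αmax - Hmin * αmin ≤ s * (Hmin * (1 - αmin) - Hmax * (1 - αmax)) := by
    nlinarith [hcomp]
  have hnumnn : 0 ≤ Hmax * αmax - Hmin * αmin := by
    nlinarith
  have hd : 0 ≤ Hmin * (1 - αmin) - Hmax * (1 - αmax) := by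
    by_contra hneg
    push_neg at hneg
    nlinarith
  have h2' : αmin ≤ 1 - (Hmax / Hmin) * (1 - αmax) := by
    rw [div_mul_eq_mul_div, le_sub_comm, div_le_iff₀ hHmin]
    nlinarith
  refine ⟨?_, h2', ?_⟩
  · have h1' : 1 - αmax ≤ Hmin / Hmax := by
      rw [le_div_iff₀ hHmax]; nlinarith
    linarith
  · rcases eq_or_lt_of_le hd with hd0 | hdpos
    · rw [← hd0, div_zero]
      positivity
    · rw [ge_iff_le, div_le_iff₀ hdpos]
      linarith [hkey]
end

section
/- Let 0 ≤ α_min ≤ α_max < 1 and M > 1 with s = √M. Then (s - α_min(s-1))/(s - α_max(s-1)) ≥ 1, and for any positive reals H̃_max ≥ H̃_min satisfying H̃_max/H̃_min ≤ (s - α_min(s-1))/(s - α_max(s-1)), every H ∈ [H̃_min, H̃_max] admits h with H̃_max/(s - α_min(s-1)) ≤ h ≤ H̃_min/(s - α_max(s-1)) such that α = (s·h - H)/(h(s-1)) lies in [α_min, α_max]. -/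
theorem votcsw_height_clipping
    (M αmin αmax s : ℝ)
    (h1 : 0 ≤ αmin) (h2 : αmin ≤ αmax) (h3 : αmax < 1) (hM : 1 < M)
    (hs : s = Real.sqrt M) :
    (s - αmin * (s - 1)) / (s - αmax * (s - 1)) ≥ 1 ∧
    ∀ Hmin Hmax : ℝ, 0 < Hmin → Hmin ≤ Hmax →
      Hmax / Hmin ≤ (s - αmin * (s - 1)) / (s - αmax * (s - 1)) →
      ∀ H : ℝ, Hmin ≤ H → H ≤ Hmax →
        ∃ h : ℝ, Hmax / (s - αmin * (s - 1)) ≤ h ∧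
          h ≤ Hmin / (s - αmax * (s - 1)) ∧
          αmin ≤ (s * h - H) / (h * (s - 1)) ∧
          (s * h - H) / (h * (s - 1)) ≤ αmax := by
  have hs1 : 1 < s := by
    have hM0 : (0:ℝ) ≤ M := by linarith
    have h := Real.sq_sqrt hM0
    have hnn := Real.sqrt_nonneg M
    rw [hs]; nlinarith
  have dmax_pos : 0 < s - αmax * (s - 1) := by nlinarith
  have dmin_ge : s - αmax * (s - 1) ≤ s - αmin * (s - 1) := by nlinarith
  have dmin_pos : 0 < s - αmin * (s - 1) := lt_of_lt_of_le dmax_pos dmin_ge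
  constructor
  · rw [ge_iff_le, le_div_iff₀ dmax_pos]; linarith
  intro Hmin Hmax hHmin hle hratio H hH1 hH2
  refine ⟨Hmin / (s - αmax * (s - 1)), ?_, le_refl _, ?_, ?_⟩
  · rw [div_le_div_iff₀ dmin_pos dmax_pos]
    have := (div_le_div_iff₀ hHmin dmax_pos).mp hratio
    linarith
  · set h := Hmin / (s - αmax * (s - 1)) with hh
    have hpos : 0 < h := div_pos hHmin dmax_pos
    have hd : 0 < h * (s - 1) := mul_pos hpos (by linarith)
    rw [le_div_iff₀ hd]
    have hge : Hmax ≤ h * (s - αmin * (s - 1)) := by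
      rw [hh, div_mul_eq_mul_div, le_div_iff₀ dmax_pos]
      have := (div_le_div_iff₀ hHmin dmax_pos).mp hratio
      linarith
    have : H ≤ h * (s - αmin * (s - 1)) := le_trans hH2 hge
    nlinarith
  · set h := Hmin / (s - αmax * (s - 1)) with hh
    have hpos : 0 < h := div_pos hHmin dmax_pos
    have hd : 0 < h * (s - 1) := mul_pos hpos (by linarith)
    rw [div_le_iff₀ hd]
    have heq : h * (s - αmax * (s - 1)) = Hmin := by
      rw [hh]; field_simp
    have : h * (s - αmax * (s - 1)) ≤ H := by rw [heq]; exact hH1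
    nlinarith
end
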